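/- arXiv:2212.03080 — 6 statements merged into one kernel-verified Lean document; each statement's English description precedes it below -/
import Mathlib

section
/- Let n ≥ 2, 0 < p < 1, and let Q be the n×n matrix with entries Q_{ij} = ((1−p)/(1−p^n))·p^{((j−i−1) mod n)} for i,j ∈ {1,...,n}. Let {V^{(h)}}_{h≥1} be a homogeneous Markov chain on n states with transition matrix Q and arbitrary initial probability vector π^{(0)}, and let π^{(h)} denote the probability vector of the marginal distribution of V^{(h)}. Then π^{(h)} converges to the uniform vector π^{(∞)} = (1/n, ..., 1/n) as h → ∞, and for all h ≥ 0 it holds that ‖π^{(h)} − π^{(∞)}‖₁ ≤ √n · |λ₁|^h, where |λ₁| = (1−p)/√(1 + p² − 2p·cos(2π/n)). -/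
/-!
The transition matrix is circulant: `Qᵀ = circulant f` on `Fin n` with
`f e = c p^((e - 1) mod n)`. Hence every additive character `ψ` of `Fin n` diagonalises it, with
eigenvalue `(1 - p) ζ / (1 - p ζ)` where `ζ = ψ 1` is an `n`-th root of unity; for `ζ ≠ 1` its
modulus `(1 - p) / |1 - p ζ|` is largest at `ζ = exp (2πi/n)`, which gives `|λ₁|`. The deviation
`π⁽ʰ⁾ - uniform` is the `h`-th iterate of `π⁽⁰⁾ - uniform` and has no component along the trivial
character, so by Parseval its `ℓ²` norm shrinks by `|λ₁|` at each step. It starts at most `1`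
for a probability vector, and Cauchy–Schwarz turns `ℓ²` into `ℓ¹` at the cost of `√n`.
-/

open Filter Finset Matrix Topology

section Circulant

variable {G : Type*} [AddCommGroup G] [Fintype G]

/-- Fourier coefficient of `w` at `ψ`, taken without complex conjugation. -/
noncomputable def charCoeff (w : G → ℝ) (ψ : AddChar G ℂ) : ℂ := ∑ j, (w j : ℂ) * ψ j

lemma charCoeff_zero (w : G → ℝ) : charCoeff w 0 = ∑ j, w j := by
  simp [charCoeff]

lemma charCoeff_circulant_mulVec (f v : G → ℝ) (ψ : AddChar G ℂ) :
    charCoeff (circulant f *ᵥ v) ψ = charCoeff f ψ * charCoeff v ψ := by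
  have hshift : ∀ i, ∑ j, (f (j - i) : ℂ) * ψ j = charCoeff f ψ * ψ i := fun i => by
    rw [charCoeff, sum_mul]
    refine Fintype.sum_equiv (Equiv.subRight i) _ _ fun j => ?_
    rw [Equiv.subRight_apply, mul_assoc, ← AddChar.map_add_eq_mul, sub_add_cancel]
  calc charCoeff (circulant f *ᵥ v) ψ
      = ∑ i, (v i : ℂ) * ∑ j, (f (j - i) : ℂ) * ψ j := by
        simp only [charCoeff, mulVec, dotProduct, circulant_apply, Complex.ofReal_sum,
          Complex.ofReal_mul, sum_mul, mul_sum]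
        rw [sum_comm]
        exact sum_congr rfl fun i _ => sum_congr rfl fun j _ => by ring
    _ = charCoeff f ψ * charCoeff v ψ := by
        simp only [hshift, charCoeff, mul_sum]
        exact sum_congr rfl fun i _ => by ring

lemma charCoeff_circulant_pow_mulVec [DecidableEq G] (f v : G → ℝ) (ψ : AddChar G ℂ)
    (h : ℕ) :
    charCoeff (circulant f ^ h *ᵥ v) ψ = charCoeff f ψ ^ h * charCoeff v ψ := by
  induction h with
  | zero => simp
  | succ h ih => rw [pow_succ', ← mulVec_mulVec, charCoeff_circulant_mulVec, ih, pow_succ']; ring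

theorem sum_sq_norm_charCoeff [DecidableEq G] (w : G → ℝ) :
    ∑ ψ : AddChar G ℂ, ‖charCoeff w ψ‖ ^ 2 = Fintype.card G * ∑ j, w j ^ 2 := by
  have key : ∀ ψ : AddChar G ℂ, ((‖charCoeff w ψ‖ ^ 2 : ℝ) : ℂ) =
      ∑ j, ∑ k, (w j : ℂ) * w k * ψ (j - k) := fun ψ => by
    rw [Complex.ofReal_pow, ← Complex.mul_conj', charCoeff, map_sum, sum_mul_sum]
    refine sum_congr rfl fun j _ => sum_congr rfl fun k _ => ?_
    rw [map_mul, Complex.conj_ofReal, ← AddChar.map_neg_eq_conj, sub_eq_add_neg,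
      AddChar.map_add_eq_mul]
    ring
  apply Complex.ofReal_injective
  rw [Complex.ofReal_sum]
  calc ∑ ψ : AddChar G ℂ, ((‖charCoeff w ψ‖ ^ 2 : ℝ) : ℂ)
      = ∑ j, ∑ k, (w j : ℂ) * w k * ∑ ψ : AddChar G ℂ, ψ (j - k) := by
        simp only [key, mul_sum]
        rw [sum_comm]
        exact sum_congr rfl fun j _ => sum_comm
    _ = ∑ j, (Fintype.card G : ℂ) * (w j : ℂ) ^ 2 := by
        refine sum_congr rfl fun j _ => ?_
        simp only [AddChar.sum_apply_eq_ite, sub_eq_zero, mul_ite, mul_zero, sum_ite_eq,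
          mem_univ, if_true]
        ring
    _ = _ := by push_cast; rw [mul_sum]

lemma circulant_mulVec_const {f : G → ℝ} (hf : ∑ e, f e = 1) (c : ℝ) :
    circulant f *ᵥ (fun _ => c) = fun _ => c := by
  ext i
  simp only [mulVec, dotProduct, circulant_apply, ← sum_mul]
  rw [Fintype.sum_equiv (Equiv.subLeft i) (fun j => f (i - j)) f fun _ => rfl, hf, one_mul]

lemma circulant_pow_mulVec_const [DecidableEq G] {f : G → ℝ} (hf : ∑ e, f e = 1) (c : ℝ)
    (h : ℕ) : circulant f ^ h *ᵥ (fun _ => c) = fun _ => c := by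
  induction h with
  | zero => simp
  | succ h ih => rw [pow_succ, ← mulVec_mulVec, circulant_mulVec_const hf, ih]

theorem sum_sq_circulant_pow_mulVec_le [DecidableEq G] {f v : G → ℝ} (hv : ∑ j, v j = 0)
    {r : ℝ} (hf : ∀ ψ : AddChar G ℂ, ψ ≠ 0 → ‖charCoeff f ψ‖ ≤ r) (h : ℕ) :
    ∑ j, (circulant f ^ h *ᵥ v) j ^ 2 ≤ (r ^ h) ^ 2 * ∑ j, v j ^ 2 := by
  have hterm : ∀ ψ : AddChar G ℂ, ‖charCoeff (circulant f ^ h *ᵥ v) ψ‖ ^ 2 ≤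
      (r ^ h) ^ 2 * ‖charCoeff v ψ‖ ^ 2 := fun ψ => by
    rw [charCoeff_circulant_pow_mulVec, norm_mul, norm_pow, mul_pow]
    by_cases hψ : ψ = 0
    · simp [hψ, charCoeff_zero, hv]
    · gcongr
      exact hf ψ hψ
  have hcard : (0 : ℝ) < Fintype.card G := by exact_mod_cast Fintype.card_pos
  have hsum := sum_le_sum fun ψ (_ : ψ ∈ univ) => hterm ψ
  rw [← mul_sum, sum_sq_norm_charCoeff, sum_sq_norm_charCoeff, mul_left_comm] at hsum
  exact le_of_mul_le_mul_left hsum hcard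

lemma sum_sq_sub_inv_card_le_one {v : G → ℝ} (hv0 : ∀ j, 0 ≤ v j) (hv1 : ∑ j, v j = 1) :
    ∑ j, (v j - (Fintype.card G : ℝ)⁻¹) ^ 2 ≤ 1 := by
  have hcard : (0 : ℝ) < Fintype.card G := by exact_mod_cast Fintype.card_pos
  have hsq : ∑ j, v j ^ 2 ≤ 1 := by
    simpa [hv1] using sum_sq_le_sq_sum_of_nonneg fun j (_ : j ∈ univ) => hv0 j
  have hexpand : ∑ j, (v j - (Fintype.card G : ℝ)⁻¹) ^ 2 =
      ∑ j, v j ^ 2 - (Fintype.card G : ℝ)⁻¹ := by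
    simp only [sub_sq, sum_add_distrib, sum_sub_distrib, ← sum_mul, ← mul_sum, hv1, sum_const,
      card_univ, nsmul_eq_mul]
    field_simp
    ring
  rw [hexpand]
  linarith [inv_pos.mpr hcard]

lemma sum_abs_le_sqrt_card_mul_sqrt_sum_sq {ι : Type*} [Fintype ι] (x : ι → ℝ) :
    ∑ i, |x i| ≤ √(Fintype.card ι) * √(∑ i, x i ^ 2) := by
  simpa [mul_comm] using Real.sum_mul_le_sqrt_mul_sqrt univ (fun i => |x i|) 1

theorem sum_abs_circulant_pow_mulVec_sub_le [DecidableEq G] {f v : G → ℝ}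
    (hf1 : ∑ e, f e = 1) (hv0 : ∀ j, 0 ≤ v j) (hv1 : ∑ j, v j = 1) {r : ℝ} (hr : 0 ≤ r)
    (hf : ∀ ψ : AddChar G ℂ, ψ ≠ 0 → ‖charCoeff f ψ‖ ≤ r) (h : ℕ) :
    ∑ j, |(circulant f ^ h *ᵥ v) j - (Fintype.card G : ℝ)⁻¹| ≤
      √(Fintype.card G) * r ^ h := by
  set u : G → ℝ := fun _ => (Fintype.card G : ℝ)⁻¹
  have hcard : (0 : ℝ) < Fintype.card G := by exact_mod_cast Fintype.card_pos
  have hw : ∑ j, (v - u) j = 0 := by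
    simp [u, sum_sub_distrib, hv1, hcard.ne']
  have hshift : (fun j => (circulant f ^ h *ᵥ v) j - (Fintype.card G : ℝ)⁻¹) =
      circulant f ^ h *ᵥ (v - u) := by
    rw [mulVec_sub, circulant_pow_mulVec_const hf1]
    rfl
  calc ∑ j, |(circulant f ^ h *ᵥ v) j - (Fintype.card G : ℝ)⁻¹|
      = ∑ j, |(circulant f ^ h *ᵥ (v - u)) j| := by rw [← hshift]
    _ ≤ √(Fintype.card G) * √(∑ j, (circulant f ^ h *ᵥ (v - u)) j ^ 2) :=
        sum_abs_le_sqrt_card_mul_sqrt_sum_sq _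
    _ ≤ √(Fintype.card G) * √((r ^ h) ^ 2) := by
        gcongr
        exact (sum_sq_circulant_pow_mulVec_le hw hf h).trans
          (mul_le_of_le_one_right (by positivity) (sum_sq_sub_inv_card_le_one hv0 hv1))
    _ = √(Fintype.card G) * r ^ h := by rw [Real.sqrt_sq (pow_nonneg hr h)]

end Circulant

namespace Real

lemma cos_le_cos_of_le_of_le_two_pi_sub {a x : ℝ} (ha : 0 ≤ a) (hax : a ≤ x)
    (hxa : x ≤ 2 * π - a) : cos x ≤ cos a := by
  rcases le_total x π with hx | hx
  · exact cos_le_cos_of_nonneg_of_le_pi ha hx hax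
  · rw [← cos_two_pi_sub x]
    exact cos_le_cos_of_nonneg_of_le_pi ha (by linarith) (by linarith)

end Real

lemma Complex.re_le_cos_two_pi_div_of_pow_eq_one {n : ℕ} [NeZero n] {ζ : ℂ} (hζn : ζ ^ n = 1)
    (hζ1 : ζ ≠ 1) : ζ.re ≤ Real.cos (2 * Real.pi / n) := by
  obtain ⟨k, hkn, rfl⟩ :=
    (Complex.isPrimitiveRoot_exp n (NeZero.ne n)).eq_pow_of_pow_eq_one hζn
  have hk : k ≠ 0 := by rintro rfl; exact hζ1 (pow_zero _)
  have hnR : (0 : ℝ) < n := Nat.cast_pos.mpr (Nat.pos_of_neZero n)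
  have hre : (Complex.exp (2 * Real.pi * Complex.I / n) ^ k).re =
      Real.cos (2 * Real.pi * k / n) := by
    rw [← Complex.exp_nat_mul, ← Complex.exp_ofReal_mul_I_re]
    congr 2
    push_cast
    ring
  rw [hre]
  have hk1 : (1 : ℝ) ≤ k := by exact_mod_cast Nat.one_le_iff_ne_zero.mpr hk
  have hkn' : (k : ℝ) + 1 ≤ n := by exact_mod_cast hkn
  apply Real.cos_le_cos_of_le_of_le_two_pi_sub (by positivity)
  · rw [div_le_div_iff_of_pos_right hnR]; nlinarith [Real.pi_pos]
  · rw [div_le_iff₀ hnR, sub_mul, div_mul_cancel₀ _ hnR.ne']; nlinarith [Real.pi_pos]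

lemma Complex.norm_one_sub_mul_sq {ζ : ℂ} (hζ : ‖ζ‖ = 1) (p : ℝ) :
    ‖1 - p * ζ‖ ^ 2 = 1 + p ^ 2 - 2 * p * ζ.re := by
  have hζ2 : ζ.re * ζ.re + ζ.im * ζ.im = 1 := by
    rw [← Complex.normSq_apply, ← Complex.sq_norm, hζ, one_pow]
  rw [Complex.sq_norm, Complex.normSq_apply]
  simp only [Complex.sub_re, Complex.one_re, Complex.mul_re, Complex.ofReal_re, Complex.ofReal_im,
    Complex.sub_im, Complex.one_im, Complex.mul_im]
  linear_combination p ^ 2 * hζ2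

namespace AddChar

variable {n : ℕ} [NeZero n] (ψ : AddChar (Fin n) ℂ)

open Fin.CommRing in
lemma apply_fin_eq_pow (j : Fin n) : ψ j = ψ 1 ^ (j : ℕ) := by
  rw [← map_nsmul_eq_pow, nsmul_one, Fin.cast_val_eq_self]

open Fin.CommRing in
lemma apply_one_pow_card : ψ 1 ^ n = 1 := by
  rw [← map_nsmul_eq_pow, nsmul_one, Fin.natCast_self, map_zero_eq_one]

end AddChar

section SkipRingRate

variable {n : ℕ} {p : ℝ}

/-- The paper's `|λ₁|`. -/
noncomputable def skipRingRate (n : ℕ) (p : ℝ) : ℝ :=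
  (1 - p) / √(1 + p ^ 2 - 2 * p * Real.cos (2 * Real.pi / n))

lemma one_sub_sq_le_one_add_sq_sub_mul_cos (p x : ℝ) (hp0 : 0 ≤ p) :
    (1 - p) ^ 2 ≤ 1 + p ^ 2 - 2 * p * Real.cos x := by
  nlinarith [Real.cos_le_one x]

lemma skipRingRate_nonneg (hp1 : p ≤ 1) : 0 ≤ skipRingRate n p :=
  div_nonneg (by linarith) (Real.sqrt_nonneg _)

lemma skipRingRate_lt_one (hn : 2 ≤ n) (hp0 : 0 < p) (hp1 : p < 1) : skipRingRate n p < 1 := by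
  have hcos : Real.cos (2 * Real.pi / n) < 1 := by
    rw [← Real.cos_zero]
    have hn' : (2 : ℝ) ≤ n := by exact_mod_cast hn
    refine Real.cos_lt_cos_of_nonneg_of_le_pi le_rfl ?_ (by positivity)
    rw [div_le_iff₀ (by positivity)]
    nlinarith [Real.pi_pos]
  have hlt : (1 - p) ^ 2 < 1 + p ^ 2 - 2 * p * Real.cos (2 * Real.pi / n) := by nlinarith
  rw [skipRingRate, div_lt_one (Real.sqrt_pos.mpr ((pow_pos (by linarith) 2).trans hlt))]
  calc 1 - p = √((1 - p) ^ 2) := (Real.sqrt_sq (by linarith)).symm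
    _ < _ := Real.sqrt_lt_sqrt (by positivity) hlt

end SkipRingRate

section SkipKernel

variable {n : ℕ} [NeZero n] {p : ℝ}

/-- A jump from node `i` to node `i + e` covers ring distance `d ∈ {1, …, n}` with
`d - 1 = (e - 1 : Fin n)`, so `Qᵀ = circulant (skipKernel n p)`. -/
noncomputable def skipKernel (n : ℕ) [NeZero n] (p : ℝ) (e : Fin n) : ℝ :=
  (1 - p) / (1 - p ^ n) * p ^ ((e - 1 : Fin n) : ℕ)

open Fin.CommRing in
lemma transpose_eq_circulant_skipKernel {Q : Matrix (Fin n) (Fin n) ℝ}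
    (hQ : ∀ i j : Fin n,
      Q i j = ((1 - p) / (1 - p ^ n)) * p ^ ((((j : ℤ) - (i : ℤ) - 1) % (n : ℤ)).toNat)) :
    Qᵀ = circulant (skipKernel n p) := by
  ext i j
  rw [transpose_apply, hQ, circulant_apply, skipKernel, ← Fin.val_intCast]
  push_cast
  rfl

lemma charCoeff_skipKernel (hp0 : 0 ≤ p) (hp1 : p < 1) (ψ : AddChar (Fin n) ℂ) :
    charCoeff (skipKernel n p) ψ = ((1 - p : ℝ) : ℂ) * ψ 1 / (1 - p * ψ 1) := by
  have hpζ : (p : ℂ) * ψ 1 ≠ 1 := fun h => by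
    have := congrArg norm h
    rw [norm_mul, AddChar.norm_apply, mul_one, Complex.norm_real, Real.norm_of_nonneg hp0,
      norm_one] at this
    exact hp1.ne this
  have hpn : (p : ℂ) ^ n ≠ 1 := by exact_mod_cast (pow_lt_one₀ hp0 hp1 (NeZero.ne n)).ne
  calc charCoeff (skipKernel n p) ψ
      = ∑ d : Fin n, (skipKernel n p (d + 1) : ℂ) * ψ (d + 1) :=
        (Fintype.sum_equiv (Equiv.addRight 1) _ _ fun _ => rfl).symm
    _ = ∑ d : Fin n, ((1 - p) / (1 - p ^ n) : ℂ) * ψ 1 * ((p : ℂ) * ψ 1) ^ (d : ℕ) := by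
        refine sum_congr rfl fun d _ => ?_
        rw [skipKernel, add_sub_cancel_right, AddChar.map_add_eq_mul, AddChar.apply_fin_eq_pow]
        push_cast
        ring
    _ = ((1 - p : ℝ) : ℂ) * ψ 1 / (1 - p * ψ 1) := by
        rw [← mul_sum, Fin.sum_univ_eq_sum_range (fun d => ((p : ℂ) * ψ 1) ^ d),
          geom_sum_eq hpζ, mul_pow, AddChar.apply_one_pow_card, mul_one]
        field_simp [sub_ne_zero.mpr hpn, sub_ne_zero.mpr hpn.symm, sub_ne_zero.mpr hpζ,
          sub_ne_zero.mpr hpζ.symm]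
        push_cast
        ring

lemma sum_skipKernel (hp0 : 0 ≤ p) (hp1 : p < 1) : ∑ e, skipKernel n p e = 1 := by
  have h := charCoeff_skipKernel (n := n) hp0 hp1 0
  rw [charCoeff_zero, AddChar.zero_apply, mul_one, mul_one, Complex.ofReal_sub,
    Complex.ofReal_one, div_self (sub_ne_zero.mpr (by exact_mod_cast hp1.ne'))] at h
  exact_mod_cast h

lemma norm_charCoeff_skipKernel_le (hp0 : 0 ≤ p) (hp1 : p < 1) {ψ : AddChar (Fin n) ℂ}
    (hψ : ψ ≠ 0) : ‖charCoeff (skipKernel n p) ψ‖ ≤ skipRingRate n p := by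
  have hζ1 : ψ 1 ≠ 1 := fun h1 =>
    hψ (AddChar.eq_zero_iff.mpr fun j => by rw [AddChar.apply_fin_eq_pow, h1, one_pow])
  have hre := Complex.re_le_cos_two_pi_div_of_pow_eq_one (AddChar.apply_one_pow_card ψ) hζ1
  have hdist : √(1 + p ^ 2 - 2 * p * Real.cos (2 * Real.pi / n)) ≤ ‖1 - p * ψ 1‖ := by
    rw [← Real.sqrt_sq (norm_nonneg (1 - p * ψ 1)),
      Complex.norm_one_sub_mul_sq (AddChar.norm_apply ψ 1)]
    exact Real.sqrt_le_sqrt (by nlinarith)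
  have hpos : 0 < √(1 + p ^ 2 - 2 * p * Real.cos (2 * Real.pi / n)) := Real.sqrt_pos.mpr
    ((pow_pos (by linarith) 2).trans_le (one_sub_sq_le_one_add_sq_sub_mul_cos _ _ hp0))
  rw [charCoeff_skipKernel hp0 hp1, norm_div, norm_mul, AddChar.norm_apply, mul_one,
    Complex.norm_real, Real.norm_of_nonneg (by linarith)]
  exact div_le_div_of_nonneg_left (by linarith) hpos hdist

end SkipKernel

/-- Mixing of the Skip-Ring Markov chain: with transition matrix
`Q i j = ((1−p)/(1−pⁿ))·p^((j−i−1) mod n)` (0-indexed), the marginal distributions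
`π⁽ʰ⁾ = π⁽⁰⁾ Qʰ` converge to uniform, and
`‖π⁽ʰ⁾ − π⁽∞⁾‖₁ ≤ √n · |lam1|ʰ` with `|lam1| = (1−p)/√(1+p²−2p·cos(2π/n))`. -/
theorem skip_ring_markov_chain_mixing
    (n : ℕ) (hn : 2 ≤ n) (p : ℝ) (hp0 : 0 < p) (hp1 : p < 1)
    (Q : Matrix (Fin n) (Fin n) ℝ)
    (hQ : ∀ i j : Fin n,
      Q i j = ((1 - p) / (1 - p ^ n)) * p ^ ((((j : ℤ) - (i : ℤ) - 1) % (n : ℤ)).toNat))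
    (π0 : Fin n → ℝ) (hπ0nonneg : ∀ i, 0 ≤ π0 i) (hπ0sum : ∑ i, π0 i = 1)
    (π : ℕ → Fin n → ℝ) (hπ : ∀ h, π h = Matrix.vecMul π0 (Q ^ h))
    (lam1 : ℝ)
    (hlam1 : lam1 = (1 - p) / Real.sqrt (1 + p ^ 2 - 2 * p * Real.cos (2 * Real.pi / n))) :
    Tendsto π atTop (nhds (fun _ => 1 / (n : ℝ))) ∧
      ∀ h : ℕ, ∑ i, |π h i - 1 / (n : ℝ)| ≤ Real.sqrt n * lam1 ^ h := by
  have : NeZero n := ⟨by omega⟩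
  have hlam : lam1 = skipRingRate n p := hlam1
  have hπ_eq : ∀ h, π h = circulant (skipKernel n p) ^ h *ᵥ π0 := fun h => by
    rw [hπ, ← transpose_transpose (Q ^ h), vecMul_transpose, transpose_pow,
      transpose_eq_circulant_skipKernel hQ]
  have hl1 : ∀ h : ℕ, ∑ i, |π h i - 1 / (n : ℝ)| ≤ √n * lam1 ^ h := fun h => by
    simpa [hπ_eq, hlam, one_div] using sum_abs_circulant_pow_mulVec_sub_le
      (sum_skipKernel hp0.le hp1) hπ0nonneg hπ0sum (skipRingRate_nonneg hp1.le)
      (fun ψ hψ => norm_charCoeff_skipKernel_le hp0.le hp1 hψ) h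
  refine ⟨tendsto_pi_nhds.2 fun i => ?_, hl1⟩
  have hlim : Tendsto (fun h : ℕ => √n * lam1 ^ h) atTop (𝓝 0) := by
    rw [hlam]
    simpa using (tendsto_pow_atTop_nhds_zero_of_lt_one (skipRingRate_nonneg hp1.le)
      (skipRingRate_lt_one hn hp0 hp1)).const_mul √n
  refine tendsto_sub_nhds_zero_iff.1 (squeeze_zero_norm (fun h => ?_) hlim)
  exact (single_le_sum (fun j _ => abs_nonneg (π h j - 1 / (n : ℝ))) (mem_univ i)).trans (hl1 h)
end

section
/- Let n ≥ 2, 0 < p < 1, ω = e^{2πi/n}, and for j ∈ {0,1,...,n−1} let λ_j = (1−p)ω^j/(1 − p·ω^j). Then |λ_j| = (1−p)/√(1 + p² − 2p·cos(2πj/n)) for every j, λ_0 = 1, and |λ_j| ≤ |λ₁| < 1 for all j ∈ {1,...,n−1}. -/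
open Complex

/-
The `λ_j` are values of the Möbius map `z ↦ (1 - p) z / (1 - p z)` at the `n`-th roots of unity
`ω^j = e^{iθ_j}`, `θ_j = 2πj/n`. Since `|ω^j| = 1`, only the denominator matters, and
`|1 - p e^{iθ}|² = 1 + p² - 2p cos θ` is decreasing in `cos θ`. Among `j = 1, …, n-1` the cosine
`cos θ_j` is largest at `j = 1` (and `j = n - 1`), which gives `|λ_j| ≤ |λ_1|`; and
`1 + p² - 2p cos θ_1 > (1 - p)²` because `cos θ_1 < 1`, which gives `|λ_1| < 1`.
-/

open Real

namespace Complex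

theorem exp_two_pi_mul_I_div_pow (n j : ℕ) :
    exp (2 * π * I / n) ^ j = exp (↑(2 * π * j / n) * I) := by
  rw [← exp_nat_mul]
  push_cast
  ring_nf

theorem norm_one_sub_ofReal_mul_exp_mul_I (p θ : ℝ) :
    ‖1 - (p : ℂ) * exp (θ * I)‖ = √(1 + p ^ 2 - 2 * p * Real.cos θ) := by
  rw [norm_def, normSq_apply]
  congr 1
  simp only [sub_re, sub_im, mul_re, mul_im, one_re, one_im, ofReal_re, ofReal_im,
    exp_ofReal_mul_I_re, exp_ofReal_mul_I_im]
  linear_combination p ^ 2 * Real.sin_sq_add_cos_sq θ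

theorem norm_mul_exp_mul_I_div_one_sub {p : ℝ} (hp : p ≤ 1) (θ : ℝ) :
    ‖(1 - (p : ℂ)) * exp (θ * I) / (1 - p * exp (θ * I))‖
      = (1 - p) / √(1 + p ^ 2 - 2 * p * Real.cos θ) := by
  rw [norm_div, norm_mul, norm_exp_ofReal_mul_I, mul_one, norm_one_sub_ofReal_mul_exp_mul_I,
    ← ofReal_one, ← ofReal_sub, norm_real, Real.norm_of_nonneg (sub_nonneg.2 hp)]

end Complex

namespace Real

theorem cos_two_pi_div_lt_one {n : ℝ} (hn : 2 ≤ n) : cos (2 * π / n) < 1 := by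
  have hpos : 0 < 2 * π / n := by positivity
  have hle : 2 * π / n ≤ π := by
    rw [div_le_iff₀ (by linarith)]
    nlinarith [pi_pos]
  simpa using cos_lt_cos_of_nonneg_of_le_pi le_rfl hle hpos

theorem cos_two_pi_mul_div_le_cos_two_pi_div {n x : ℝ} (h1 : 1 ≤ x) (h2 : x ≤ n - 1) :
    cos (2 * π * x / n) ≤ cos (2 * π / n) := by
  have hn : 0 < n := by linarith
  have hstep : 0 ≤ 2 * π / n := by positivity
  wlog hx : x ≤ n / 2 generalizing x
  · have hsymm : cos (2 * π * x / n) = cos (2 * π * (n - x) / n) := by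
      rw [show 2 * π * (n - x) / n = 2 * π - 2 * π * x / n by field_simp, cos_two_pi_sub]
    rw [hsymm]
    exact this (by linarith) (by linarith) (by linarith)
  apply cos_le_cos_of_nonneg_of_le_pi hstep
  · rw [div_le_iff₀ hn]; nlinarith [pi_pos]
  · exact div_le_div_of_nonneg_right (by nlinarith [pi_pos]) hn.le

end Real

section

variable {p : ℝ}

theorem div_sqrt_one_add_sq_sub_le (hp0 : 0 ≤ p) (hp1 : p < 1) {c c' : ℝ} (hcc' : c ≤ c')
    (hc' : c' ≤ 1) :
    (1 - p) / √(1 + p ^ 2 - 2 * p * c) ≤ (1 - p) / √(1 + p ^ 2 - 2 * p * c') := by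
  have hpos : 0 < 1 + p ^ 2 - 2 * p * c' := by nlinarith
  gcongr

theorem div_sqrt_one_add_sq_sub_lt_one (hp0 : 0 < p) (hp1 : p < 1) {c : ℝ} (hc : c < 1) :
    (1 - p) / √(1 + p ^ 2 - 2 * p * c) < 1 := by
  have hlt : 1 - p < √(1 + p ^ 2 - 2 * p * c) := by
    rw [lt_sqrt (by linarith)]
    nlinarith
  exact (div_lt_one (by linarith)).2 hlt

end

/-- For `ω = e^{2πi/n}` and `λ_j = (1−p)ω^j/(1 − p·ω^j)`:
`|λ_j| = (1−p)/√(1+p²−2p·cos(2πj/n))` for every `j ∈ {0,…,n−1}`, `λ_0 = 1`, and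
`|λ_j| ≤ |λ_1| < 1` for `1 ≤ j ≤ n−1`. -/
theorem skip_ring_eigenvalue_magnitudes
    (n : ℕ) (hn : 2 ≤ n) (p : ℝ) (hp0 : 0 < p) (hp1 : p < 1)
    (ω : ℂ) (hω : ω = Complex.exp (2 * Real.pi * Complex.I / n))
    (lam : ℕ → ℂ)
    (hlam : ∀ j : ℕ, lam j = (1 - (p : ℂ)) * ω ^ j / (1 - (p : ℂ) * ω ^ j)) :
    (∀ j : ℕ, j < n →
      ‖lam j‖
        = (1 - p) / Real.sqrt (1 + p ^ 2 - 2 * p * Real.cos (2 * Real.pi * j / n))) ∧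
    lam 0 = 1 ∧
    (∀ j : ℕ, 1 ≤ j → j ≤ n - 1 → ‖lam j‖ ≤ ‖lam 1‖) ∧
    ‖lam 1‖ < 1 := by
  subst hω
  have hnorm (j : ℕ) : ‖lam j‖ = (1 - p) / √(1 + p ^ 2 - 2 * p * Real.cos (2 * π * j / n)) := by
    rw [hlam, exp_two_pi_mul_I_div_pow, norm_mul_exp_mul_I_div_one_sub hp1.le]
  have hn' : (2 : ℝ) ≤ n := by exact_mod_cast hn
  refine ⟨fun j _ => hnorm j, ?_, fun j hj1 hjn => ?_, ?_⟩
  · rw [hlam, pow_zero, mul_one, mul_one, div_self (sub_ne_zero.2 (by exact_mod_cast hp1.ne'))]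
  · have hj1' : (1 : ℝ) ≤ j := by exact_mod_cast hj1
    have hjn' : (j : ℝ) ≤ n - 1 := by
      rw [le_sub_iff_add_le]; exact_mod_cast Nat.add_le_of_le_sub (by omega) hjn
    rw [hnorm, hnorm, Nat.cast_one, mul_one]
    exact div_sqrt_one_add_sq_sub_le hp0.le hp1
      (cos_two_pi_mul_div_le_cos_two_pi_div hj1' hjn') (cos_le_one _)
  · rw [hnorm, Nat.cast_one, mul_one]
    exact div_sqrt_one_add_sq_sub_lt_one hp0 hp1 (cos_two_pi_div_lt_one hn')
end

section
/- Let n ≥ 2, 0 < p < 1, and let Q be the n×n matrix with entries Q_{ij} = ((1−p)/(1−p^n))·p^{((j−i−1) mod n)} for i,j ∈ {1,...,n}. Then lim_{h→∞} Q^h = Q^∞, where Q^∞ is the n×n matrix all of whose entries equal 1/n. -/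
/-!
`Q` is the transpose of the circulant matrix of a probability vector, hence doubly stochastic,
and all its entries are at least `δ = (1 - p) p ^ (n - 1) / (1 - p ^ n) > 0`. By Doeblin's
argument each multiplication by `Q` shrinks the oscillation of every column by the factor
`1 - n δ < 1`, so the columns of `Q ^ h` become constant geometrically fast; since each column
of the doubly stochastic matrix `Q ^ h` sums to `1`, that constant is `1 / n`.
-/

open Filter Finset Matrix

theorem Fin.coe_int_sub_sub_one_eq_mod {n : ℕ} [NeZero n] (u v : Fin n) :
    ((u - v - 1 : Fin n) : ℤ) = ((u : ℤ) - v - 1) % n := by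
  rw [Fin.coe_int_sub_eq_mod, Fin.coe_int_sub_eq_mod, Fin.val_one', Int.natCast_mod,
    Int.sub_emod, Int.emod_emod_of_dvd _ dvd_rfl, ← Int.sub_emod]
  exact Int.sub_emod_emod _ 1 n

theorem abs_sub_sum_div_card_le {ι : Type*} [Fintype ι] {v : ι → ℝ} {ε : ℝ}
    (hv : ∀ i i', v i - v i' ≤ ε) (i : ι) :
    |v i - (∑ k, v k) / Fintype.card ι| ≤ ε := by
  have hcard : (0 : ℝ) < Fintype.card ι := by
    have : Nonempty ι := ⟨i⟩
    exact_mod_cast Fintype.card_pos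
  have hsum : v i - (∑ k, v k) / Fintype.card ι = (∑ k, (v i - v k)) / Fintype.card ι := by
    rw [sum_sub_distrib]
    field_simp
    simp [mul_comm]
  rw [hsum, abs_div, abs_of_pos hcard, div_le_iff₀ hcard]
  calc |∑ k, (v i - v k)| ≤ ∑ k, |v i - v k| := abs_sum_le_sum_abs _ _
    _ ≤ ∑ _k : ι, ε := sum_le_sum fun k _ => abs_sub_le_iff.2 ⟨hv i k, hv k i⟩
    _ = ε * Fintype.card ι := by simp [mul_comm]

namespace Matrix

variable {ι : Type*} [Fintype ι] [DecidableEq ι]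

theorem circulant_mem_doublyStochastic {R : Type*} [Semiring R] [PartialOrder R]
    [IsOrderedRing R] [AddGroup ι] {v : ι → R} (hv : ∀ k, 0 ≤ v k) (hsum : ∑ k, v k = 1) :
    circulant v ∈ doublyStochastic R ι := by
  refine mem_doublyStochastic_iff_sum.2 ⟨fun i j => hv _, fun i => ?_, fun j => ?_⟩
  · simpa only [circulant_apply] using (Equiv.subLeft i).sum_comp v ▸ hsum
  · simpa only [circulant_apply] using (Equiv.subRight j).sum_comp v ▸ hsum

theorem card_mul_le_one_of_le_apply {A : Matrix ι ι ℝ} (hA : A ∈ rowStochastic ℝ ι) {δ : ℝ}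
    (hδ : ∀ i j, δ ≤ A i j) (i : ι) : Fintype.card ι * δ ≤ 1 := by
  calc Fintype.card ι * δ = ∑ _j : ι, δ := by simp
    _ ≤ ∑ j, A i j := sum_le_sum fun j _ => hδ i j
    _ = 1 := sum_row_of_mem_rowStochastic hA i

/-- Doeblin's contraction estimate. -/
theorem mulVec_sub_mulVec_le {A : Matrix ι ι ℝ} (hA : A ∈ rowStochastic ℝ ι) {δ : ℝ}
    (hδ : ∀ i j, δ ≤ A i j) {v : ι → ℝ} {m M : ℝ} (hm : ∀ k, m ≤ v k) (hM : ∀ k, v k ≤ M)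
    (i i' : ι) : (A *ᵥ v) i - (A *ᵥ v) i' ≤ (1 - Fintype.card ι * δ) * (M - m) := by
  -- Subtract the common part `min (A i k) (A i' k)` of the two rows,
  -- whose total mass is at least `card ι * δ`.
  set c : ι → ℝ := fun k => min (A i k) (A i' k)
  have hrow (a : ι) : (A *ᵥ v) a - m = ∑ k, A a k * (v k - m) := by
    simp only [mulVec, dotProduct, mul_sub, sum_sub_distrib, ← sum_mul,
      sum_row_of_mem_rowStochastic hA, one_mul]
  have hc : Fintype.card ι * δ ≤ ∑ k, c k := by
    calc Fintype.card ι * δ = ∑ _k : ι, δ := by simp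
      _ ≤ ∑ k, c k := sum_le_sum fun k _ => le_min (hδ i k) (hδ i' k)
  calc (A *ᵥ v) i - (A *ᵥ v) i'
        = ∑ k, (A i k - c k) * (v k - m) - ∑ k, (A i' k - c k) * (v k - m) := by
        rw [← sub_sub_sub_cancel_right _ _ m, hrow, hrow, ← sum_sub_distrib, ← sum_sub_distrib]
        congr 1; ext k; ring
    _ ≤ ∑ k, (A i k - c k) * (M - m) - 0 := by
        gcongr with k
        · exact sub_nonneg.2 (min_le_left _ _)
        · exact hM k
        · exact sum_nonneg fun k _ =>
            mul_nonneg (sub_nonneg.2 (min_le_right _ _)) (sub_nonneg.2 (hm k))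
    _ = (1 - ∑ k, c k) * (M - m) := by
        rw [sub_zero, ← sum_mul, sum_sub_distrib, sum_row_of_mem_rowStochastic hA]
    _ ≤ (1 - Fintype.card ι * δ) * (M - m) := by
        gcongr
        exact sub_nonneg.2 ((hm i).trans (hM i))

theorem pow_apply_sub_pow_apply_le {A : Matrix ι ι ℝ} (hA : A ∈ rowStochastic ℝ ι) {δ : ℝ}
    (hδ : ∀ i j, δ ≤ A i j) (h : ℕ) (i i' j : ι) :
    (A ^ h) i j - (A ^ h) i' j ≤ (1 - Fintype.card ι * δ) ^ h := by
  induction h generalizing i i' with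
  | zero => simp only [pow_zero, one_apply]; split_ifs <;> norm_num
  | succ h ih =>
    have : Nonempty ι := ⟨i⟩
    obtain ⟨imax, hmax⟩ := Finite.exists_max fun k => (A ^ h) k j
    obtain ⟨imin, hmin⟩ := Finite.exists_min fun k => (A ^ h) k j
    have hcol (a : ι) : (A ^ (h + 1)) a j = (A *ᵥ fun k => (A ^ h) k j) a := by
      rw [pow_succ']; rfl
    rw [hcol, hcol]
    calc _ ≤ (1 - Fintype.card ι * δ) * ((A ^ h) imax j - (A ^ h) imin j) :=
          mulVec_sub_mulVec_le hA hδ hmin hmax i i'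
      _ ≤ (1 - Fintype.card ι * δ) * (1 - Fintype.card ι * δ) ^ h :=
          mul_le_mul_of_nonneg_left (ih imax imin)
            (sub_nonneg.2 (card_mul_le_one_of_le_apply hA hδ i))
      _ = (1 - Fintype.card ι * δ) ^ (h + 1) := (pow_succ' _ _).symm

theorem tendsto_pow_of_mem_doublyStochastic [Nonempty ι] {A : Matrix ι ι ℝ}
    (hA : A ∈ doublyStochastic ℝ ι) {δ : ℝ} (hδ0 : 0 < δ)
    (hδ : ∀ i j, δ ≤ A i j) :
    Tendsto (fun h : ℕ => A ^ h) atTop (nhds (of fun _ _ : ι => 1 / (Fintype.card ι : ℝ))) := by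
  have hAr : A ∈ rowStochastic ℝ ι :=
    (mem_doublyStochastic_iff_mem_rowStochastic_and_mem_colStochastic.1 hA).1
  set r := 1 - Fintype.card ι * δ
  have hr0 : 0 ≤ r := sub_nonneg.2 (card_mul_le_one_of_le_apply hAr hδ (Classical.arbitrary ι))
  have hr1 : r < 1 := sub_lt_self _ (mul_pos (by exact_mod_cast Fintype.card_pos) hδ0)
  have hclose (h : ℕ) (i j : ι) : |(A ^ h) i j - 1 / Fintype.card ι| ≤ r ^ h := by
    have hcol := sum_col_of_mem_doublyStochastic (pow_mem hA h) j
    simpa [hcol] using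
      abs_sub_sum_div_card_le (fun i i' => pow_apply_sub_pow_apply_le hAr hδ h i i' j) i
  refine tendsto_pi_nhds.2 fun i => tendsto_pi_nhds.2 fun j => ?_
  have hlim := squeeze_zero_norm (fun h => (Real.norm_eq_abs _).trans_le (hclose h i j))
    (tendsto_pow_atTop_nhds_zero_of_lt_one hr0 hr1)
  simpa using hlim.add_const (1 / (Fintype.card ι : ℝ))

end Matrix

/-- The probability that the next nonstraggling node lies `k` steps further along the ring,
so that `Q = (circulant (skipRingWeight n p))ᵀ`. -/
noncomputable def skipRingWeight (n : ℕ) [NeZero n] (p : ℝ) (k : Fin n) : ℝ :=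
  (1 - p) / (1 - p ^ n) * p ^ ((k - 1 : Fin n) : ℕ)

theorem sum_skipRingWeight {n : ℕ} [NeZero n] {p : ℝ} (hp0 : 0 ≤ p) (hp1 : p < 1) :
    ∑ k, skipRingWeight n p k = 1 := by
  have hpn : p ^ n < 1 := pow_lt_one₀ hp0 hp1 (NeZero.ne n)
  calc ∑ k, skipRingWeight n p k = (1 - p) / (1 - p ^ n) * ∑ k : Fin n, p ^ (k : ℕ) := by
        rw [mul_sum]
        exact (Equiv.subRight (1 : Fin n)).sum_comp fun k => (1 - p) / (1 - p ^ n) * p ^ (k : ℕ)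
    _ = 1 := by
        rw [Fin.sum_univ_eq_sum_range (p ^ ·), geom_sum_eq hp1.ne]
        field_simp [(sub_pos.2 hpn).ne', (sub_neg.2 hp1).ne]
        ring

theorem le_skipRingWeight {n : ℕ} [NeZero n] {p : ℝ} (hp0 : 0 ≤ p) (hp1 : p < 1) (k : Fin n) :
    (1 - p) / (1 - p ^ n) * p ^ (n - 1) ≤ skipRingWeight n p k := by
  have hpn : p ^ n < 1 := pow_lt_one₀ hp0 hp1 (NeZero.ne n)
  exact mul_le_mul_of_nonneg_left (pow_le_pow_of_le_one hp0 hp1.le (by omega))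
    (div_nonneg (sub_nonneg.2 hp1.le) (sub_nonneg.2 hpn.le))

/-- The powers of the Skip-Ring transition matrix `Q` converge
(entrywise) to the matrix `Q^∞` all of whose entries are `1/n`. -/
theorem skip_ring_matrix_powers_converge
    (n : ℕ) (hn : 2 ≤ n) (p : ℝ) (hp0 : 0 < p) (hp1 : p < 1)
    (Q : Matrix (Fin n) (Fin n) ℝ)
    (hQ : ∀ i j : Fin n,
      Q i j = ((1 - p) / (1 - p ^ n)) * p ^ ((((j : ℤ) - (i : ℤ) - 1) % (n : ℤ)).toNat)) :
    Tendsto (fun h : ℕ => Q ^ h) atTop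
      (nhds (Matrix.of fun _ _ : Fin n => (1 / (n : ℝ)))) := by
  have : NeZero n := ⟨by omega⟩
  have hQ_eq : Q = (circulant (skipRingWeight n p))ᵀ := by
    ext i j
    rw [hQ, ← Fin.coe_int_sub_sub_one_eq_mod, Int.toNat_natCast]
    rfl
  have hδ0 : 0 < (1 - p) / (1 - p ^ n) * p ^ (n - 1) :=
    mul_pos (div_pos (sub_pos.2 hp1) (sub_pos.2 (pow_lt_one₀ hp0.le hp1 (by omega))))
      (pow_pos hp0 _)
  have hQ_mem : Q ∈ doublyStochastic ℝ (Fin n) := by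
    rw [hQ_eq, transpose_mem_doublyStochastic_iff]
    exact circulant_mem_doublyStochastic
      (fun k => hδ0.le.trans (le_skipRingWeight hp0.le hp1 k)) (sum_skipRingWeight hp0.le hp1)
  simpa using tendsto_pow_of_mem_doublyStochastic hQ_mem hδ0
    (fun i j => hQ_eq ▸ le_skipRingWeight hp0.le hp1 (j - i))
end

section
/- Let n ≥ 1 and let B be a random variable taking values in {1, 2, ..., n}. Then E[ (log B)/√B ] ≤ E[ 1/√B ] · log( E[√B] / E[1/√B] ), where log denotes the natural logarithm. -/
open MeasureTheory

/-- For a random variable `B` taking values in `{1,…,n}`,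
`E[(log B)/√B] ≤ E[1/√B] · log(E[√B]/E[1/√B])`. -/
theorem expected_log_div_sqrt_bound
    {Ω : Type*} [MeasurableSpace Ω] (P : Measure Ω) [IsProbabilityMeasure P]
    (n : ℕ) (hn : 1 ≤ n) (B : Ω → ℕ) (hBmeas : Measurable B)
    (hB : ∀ ω, 1 ≤ B ω ∧ B ω ≤ n) :
    (∫ ω, Real.log (B ω) / Real.sqrt (B ω) ∂P)
      ≤ (∫ ω, 1 / Real.sqrt (B ω) ∂P) *
          Real.log ((∫ ω, Real.sqrt (B ω) ∂P) / (∫ ω, 1 / Real.sqrt (B ω) ∂P)) := by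
  -- integrability of any function of B
  have key : ∀ g : ℕ → ℝ, Integrable (fun ω => g (B ω)) P := by
    intro g
    have hm : Measurable fun ω => g (B ω) := measurable_from_top.comp hBmeas
    refine ⟨hm.aestronglyMeasurable, ?_⟩
    refine HasFiniteIntegral.of_bounded (C := (Finset.range (n+1)).sup' ⟨0, by simp⟩ (fun k => ‖g k‖)) (ae_of_all _ ?_)
    intro ω
    exact Finset.le_sup' (fun k => ‖g k‖) (Finset.mem_range.mpr (Nat.lt_succ_of_le (hB ω).2))
  set S := ∫ ω, Real.sqrt (B ω) ∂P with hSdef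
  set T := ∫ ω, 1 / Real.sqrt (B ω) ∂P with hTdef
  have hb1 : ∀ ω, (1:ℝ) ≤ (B ω : ℝ) := fun ω => by exact_mod_cast (hB ω).1
  have hsb : ∀ ω, (0:ℝ) < Real.sqrt (B ω) := fun ω =>
    Real.sqrt_pos.mpr (lt_of_lt_of_le one_pos (hb1 ω))
  have hS1 : (1:ℝ) ≤ S := by
    have := integral_mono (integrable_const (1:ℝ)) (key (fun k : ℕ => Real.sqrt k))
      (fun ω => by simpa using Real.one_le_sqrt.mpr (hb1 ω))
    simpa using this
  have hbn : ∀ ω, (B ω : ℝ) ≤ (n : ℝ) := fun ω => by exact_mod_cast (hB ω).2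
  have hTpos : 0 < T := by
    have hle : ∀ ω, (1:ℝ) / Real.sqrt n ≤ 1 / Real.sqrt (B ω) := fun ω =>
      one_div_le_one_div_of_le (hsb ω) (Real.sqrt_le_sqrt (hbn ω))
    have := integral_mono (integrable_const ((1:ℝ) / Real.sqrt n))
      (key (fun k => 1 / Real.sqrt k)) hle
    have hnpos : (0:ℝ) < Real.sqrt n :=
      Real.sqrt_pos.mpr (by exact_mod_cast Nat.lt_of_lt_of_le Nat.zero_lt_one hn)
    calc (0:ℝ) < 1 / Real.sqrt n := by positivity
      _ ≤ T := by rw [hTdef]; simpa using this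
  have hSpos : 0 < S := lt_of_lt_of_le one_pos hS1
  set a := S / T with hadef
  have hapos : 0 < a := div_pos hSpos hTpos
  -- pointwise tangent-line bound
  have hpw : ∀ ω, Real.log (B ω) / Real.sqrt (B ω)
      ≤ Real.sqrt (B ω) * (1 / a) + (Real.log a - 1) * (1 / Real.sqrt (B ω)) := by
    intro ω
    set b := (B ω : ℝ)
    have hbpos : (0:ℝ) < b := lt_of_lt_of_le one_pos (hb1 ω)
    have hlog : Real.log b ≤ b / a + (Real.log a - 1) := by
      have h1 : Real.log (b / a) ≤ b / a - 1 :=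
        Real.log_le_sub_one_of_pos (div_pos hbpos hapos)
      have h2 : Real.log (b / a) = Real.log b - Real.log a :=
        Real.log_div (ne_of_gt hbpos) (ne_of_gt hapos)
      linarith
    have hsq : Real.sqrt b * Real.sqrt b = b := Real.mul_self_sqrt hbpos.le
    have hs := hsb ω
    rw [div_le_iff₀ hs] at *
    calc Real.log b ≤ b / a + (Real.log a - 1) := hlog
      _ = (Real.sqrt b * (1 / a) + (Real.log a - 1) * (1 / Real.sqrt b)) * Real.sqrt b := by
          have h0 : Real.sqrt b ≠ 0 := hs.ne'
          field_simp
          nlinarith [hsq]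
  have hmono := integral_mono (key (fun k => Real.log k / Real.sqrt k))
    ((((key (fun k : ℕ => Real.sqrt k)).mul_const (1/a))).add (((key (fun k => 1 / Real.sqrt k)).const_mul (Real.log a - 1)))) hpw
  have hrhs : (∫ ω, (Real.sqrt (B ω) * (1 / a) + (Real.log a - 1) * (1 / Real.sqrt (B ω)))∂P)
      = T * Real.log a := by
    rw [integral_add ((key (fun k : ℕ => Real.sqrt k)).mul_const (1/a))
      ((key (fun k => 1 / Real.sqrt k)).const_mul (Real.log a - 1)),
      integral_mul_const, integral_const_mul, ← hSdef, ← hTdef]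
    have : S * (1 / a) = T := by
      rw [hadef]; field_simp
    rw [this]; ring
  calc (∫ ω, Real.log (B ω) / Real.sqrt (B ω) ∂P)
      ≤ ∫ ω, (Real.sqrt (B ω) * (1 / a) + (Real.log a - 1) * (1 / Real.sqrt (B ω))) ∂P := hmono
    _ = T * Real.log a := hrhs
end

section
/- Let (Ω, P) and (Ω', P') be probability spaces, let Z be a measurable space, and let X: Ω → Z, X': Ω' → Z be random elements and R: Ω → {1,2,...}, R': Ω' → {1,2,...} random variables such that R and R' have the same distribution. Fix r ≥ 1 and δ̂ ≥ 0 with P[R > r] ≤ δ̂. Suppose ε_1 ≤ ε_2 ≤ ... ≤ ε_r and δ_1 ≤ δ_2 ≤ ... ≤ δ_r are nonnegative reals such that for every i ∈ {1,...,r} with P[R = i] > 0 and every measurable set S ⊆ Z, P[X ∈ S | R = i] ≤ e^{ε_i}·P'[X' ∈ S | R' = i] + δ_i. Then for every measurable set S ⊆ Z, P[X ∈ S] ≤ e^{ε_r}·P'[X' ∈ S] + δ_r + δ̂. -/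
/-!
Split `{X ∈ S}` according to the value of `R`. On `{R = i}` with `i ≤ r`, multiplying the
conditional guarantee by `P[R = i] = P'[R' = i]` gives
`P[X ∈ S, R = i] ≤ e^{ε_i} P'[X' ∈ S, R' = i] + δ_i P[R = i]`, and monotonicity lets us replace
`(ε_i, δ_i)` by `(ε_r, δ_r)`. Summing over `i ≤ r`, the first terms add up to at most
`e^{ε_r} P'[X' ∈ S]` and the second to at most `δ_r`, while `{R > r}` costs at most `δ̂`.
-/

open MeasureTheory ProbabilityTheory Finset

section

variable {Ω Ω' β : Type*} [MeasurableSpace Ω] [MeasurableSpace Ω'] {μ : Measure Ω}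
  {ν : Measure Ω'}

theorem sum_measureReal_preimage_singleton_inter [MeasurableSpace β]
    [MeasurableSingletonClass β] [IsFiniteMeasure μ] {f : Ω → β} (hf : Measurable f)
    (s : Finset β) (B : Set Ω) :
    ∑ i ∈ s, μ.real (f ⁻¹' {i} ∩ B) = μ.real (f ⁻¹' s ∩ B) := by
  have h := sum_measureReal_preimage_singleton (μ := μ.restrict B) s
    (fun y _ ↦ hf (measurableSet_singleton y))
  rwa [measureReal_restrict_apply (hf s.measurableSet), sum_congr rfl
    fun i _ ↦ measureReal_restrict_apply (hf (measurableSet_singleton i))] at h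

theorem measureReal_le_sum_preimage_singleton_inter_add_tail [IsFiniteMeasure μ]
    {R : Ω → ℕ} (hR : Measurable R) (hRpos : ∀ ω, 1 ≤ R ω) (r : ℕ) (B : Set Ω) :
    μ.real B ≤ ∑ i ∈ Icc 1 r, μ.real (R ⁻¹' {i} ∩ B) + μ.real {ω | r < R ω} := by
  rw [sum_measureReal_preimage_singleton_inter hR]
  calc μ.real B ≤ μ.real (R ⁻¹' ↑(Icc 1 r) ∩ B ∪ {ω | r < R ω}) := by
        refine measureReal_mono fun ω hω ↦ ?_
        rcases le_or_gt (R ω) r with hle | hgt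
        · exact Or.inl ⟨by simp [hRpos ω, hle], hω⟩
        · exact Or.inr hgt
    _ ≤ _ := measureReal_union_le _ _

theorem measureReal_inter_le_of_cond_le [IsFiniteMeasure μ] [IsFiniteMeasure ν]
    {A B : Set Ω} {A' B' : Set Ω'} (hA : MeasurableSet A) (hA' : MeasurableSet A')
    (hAA' : μ A = ν A') {c d : ℝ} (hc : 0 ≤ c)
    (h : 0 < μ A → (μ[B | A]).toReal ≤ c * (ν[B' | A']).toReal + d) :
    μ.real (A ∩ B) ≤ c * ν.real (A' ∩ B') + d * μ.real A := by
  rcases eq_zero_or_pos (μ A) with h0 | hpos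
  · have hAB : μ.real (A ∩ B) = 0 := by
      simp [measureReal_def, measure_mono_null Set.inter_subset_left h0]
    simp only [hAB, measureReal_def, h0, ENNReal.toReal_zero, mul_zero, add_zero]
    positivity
  · have hjoint : μ.real (A ∩ B) = (μ[B | A]).toReal * μ.real A := by
      rw [measureReal_def, ← cond_mul_eq_inter hA, ENNReal.toReal_mul, measureReal_def]
    have hjoint' : ν.real (A' ∩ B') = (ν[B' | A']).toReal * μ.real A := by
      rw [measureReal_def, ← cond_mul_eq_inter hA', ENNReal.toReal_mul, measureReal_def, hAA']
    rw [hjoint, hjoint']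
    calc (μ[B | A]).toReal * μ.real A
        ≤ (c * (ν[B' | A']).toReal + d) * μ.real A := by gcongr; exact h hpos
      _ = c * ((ν[B' | A']).toReal * μ.real A) + d * μ.real A := by ring

end

theorem dp_composition_random_rounds_general
    {Ω Ω' Z : Type*} [MeasurableSpace Ω] [MeasurableSpace Ω'] [MeasurableSpace Z]
    (P : Measure Ω) (P' : Measure Ω')
    [IsProbabilityMeasure P] [IsProbabilityMeasure P']
    (X : Ω → Z) (X' : Ω' → Z) (R : Ω → ℕ) (R' : Ω' → ℕ)
    (hR : Measurable R) (hR' : Measurable R')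
    (hRpos : ∀ ω, 1 ≤ R ω)
    (hsame : Measure.map R P = Measure.map R' P')
    (r : ℕ) (hr : 1 ≤ r) (δhat : ℝ)
    (htail : (P {ω | r < R ω}).toReal ≤ δhat)
    (ε δ : ℕ → ℝ)
    (hδnonneg : ∀ i, 1 ≤ i → i ≤ r → 0 ≤ δ i)
    (hεmono : ∀ i j, 1 ≤ i → i ≤ j → j ≤ r → ε i ≤ ε j)
    (hδmono : ∀ i j, 1 ≤ i → i ≤ j → j ≤ r → δ i ≤ δ j)
    (hcond : ∀ i, 1 ≤ i → i ≤ r → 0 < P {ω | R ω = i} →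
      ∀ S : Set Z, MeasurableSet S →
        ((P[|{ω | R ω = i}]) (X ⁻¹' S)).toReal
          ≤ Real.exp (ε i) * ((P'[|{ω | R' ω = i}]) (X' ⁻¹' S)).toReal + δ i) :
    ∀ S : Set Z, MeasurableSet S →
      (P (X ⁻¹' S)).toReal
        ≤ Real.exp (ε r) * (P' (X' ⁻¹' S)).toReal + δ r + δhat := by
  intro S hS
  have hident : IdentDistrib R R' P P' := ⟨hR.aemeasurable, hR'.aemeasurable, hsame⟩
  have hround : ∀ i ∈ Icc 1 r, P.real (R ⁻¹' {i} ∩ X ⁻¹' S)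
      ≤ Real.exp (ε r) * P'.real (R' ⁻¹' {i} ∩ X' ⁻¹' S) + δ r * P.real (R ⁻¹' {i}) := by
    intro i hi
    obtain ⟨hi1, hir⟩ := mem_Icc.1 hi
    have hsing := measurableSet_singleton i
    calc P.real (R ⁻¹' {i} ∩ X ⁻¹' S)
        ≤ Real.exp (ε i) * P'.real (R' ⁻¹' {i} ∩ X' ⁻¹' S) + δ i * P.real (R ⁻¹' {i}) :=
          measureReal_inter_le_of_cond_le (hR hsing) (hR' hsing)
            (hident.measure_mem_eq hsing) (Real.exp_pos _).le
            fun hpos ↦ hcond i hi1 hir hpos S hS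
      _ ≤ _ := by
          gcongr
          exacts [hεmono i r hi1 hir le_rfl, hδmono i r hi1 hir le_rfl]
  have hδr : 0 ≤ δ r := hδnonneg r hr le_rfl
  calc P.real (X ⁻¹' S)
      ≤ ∑ i ∈ Icc 1 r, P.real (R ⁻¹' {i} ∩ X ⁻¹' S) + P.real {ω | r < R ω} :=
        measureReal_le_sum_preimage_singleton_inter_add_tail hR hRpos r _
    _ ≤ ∑ i ∈ Icc 1 r, (Real.exp (ε r) * P'.real (R' ⁻¹' {i} ∩ X' ⁻¹' S)
          + δ r * P.real (R ⁻¹' {i})) + δhat := add_le_add (sum_le_sum hround) htail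
    _ = Real.exp (ε r) * P'.real (R' ⁻¹' ↑(Icc 1 r) ∩ X' ⁻¹' S)
          + δ r * P.real (R ⁻¹' ↑(Icc 1 r)) + δhat := by
        rw [sum_add_distrib, ← mul_sum, ← mul_sum, sum_measureReal_preimage_singleton_inter hR',
          sum_measureReal_preimage_singleton _ fun i _ ↦ hR (measurableSet_singleton i)]
    _ ≤ Real.exp (ε r) * P'.real (X' ⁻¹' S) + δ r * 1 + δhat := by
        gcongr
        exacts [measure_ne_top _ _, Set.inter_subset_right, measureReal_le_one]
    _ = _ := by rw [mul_one]; rfl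

/-- Composition with a random number of rounds: if `R` and `R'` have the
same distribution, `P[R > r] ≤ δ̂`, the per-round guarantees `(ε_i, δ_i)` are nondecreasing
and nonnegative on `{1,…,r}`, and conditionally on `R = i` (whenever this event has positive
probability) the output `X` is `(ε_i, δ_i)`-close to `X'` conditioned on `R' = i`, then
unconditionally `P[X ∈ S] ≤ e^{ε_r}·P'[X' ∈ S] + δ_r + δ̂` for every measurable `S`. -/
theorem dp_composition_random_rounds
    {Ω Ω' Z : Type*} [MeasurableSpace Ω] [MeasurableSpace Ω'] [MeasurableSpace Z]
    (P : Measure Ω) (P' : Measure Ω')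
    [IsProbabilityMeasure P] [IsProbabilityMeasure P']
    (X : Ω → Z) (X' : Ω' → Z) (R : Ω → ℕ) (R' : Ω' → ℕ)
    (hX : Measurable X) (hX' : Measurable X') (hR : Measurable R) (hR' : Measurable R')
    (hRpos : ∀ ω, 1 ≤ R ω) (hR'pos : ∀ ω, 1 ≤ R' ω)
    (hsame : Measure.map R P = Measure.map R' P')
    (r : ℕ) (hr : 1 ≤ r) (δhat : ℝ) (hδhat : 0 ≤ δhat)
    (htail : (P {ω | r < R ω}).toReal ≤ δhat)
    (ε δ : ℕ → ℝ)
    (hεnonneg : ∀ i, 1 ≤ i → i ≤ r → 0 ≤ ε i)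
    (hδnonneg : ∀ i, 1 ≤ i → i ≤ r → 0 ≤ δ i)
    (hεmono : ∀ i j, 1 ≤ i → i ≤ j → j ≤ r → ε i ≤ ε j)
    (hδmono : ∀ i j, 1 ≤ i → i ≤ j → j ≤ r → δ i ≤ δ j)
    (hcond : ∀ i, 1 ≤ i → i ≤ r → 0 < P {ω | R ω = i} →
      ∀ S : Set Z, MeasurableSet S →
        ((P[|{ω | R ω = i}]) (X ⁻¹' S)).toReal
          ≤ Real.exp (ε i) * ((P'[|{ω | R' ω = i}]) (X' ⁻¹' S)).toReal + δ i) :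
    ∀ S : Set Z, MeasurableSet S →
      (P (X ⁻¹' S)).toReal
        ≤ Real.exp (ε r) * (P' (X' ⁻¹' S)).toReal + δ r + δhat :=
  dp_composition_random_rounds_general P P' X X' R R' hR hR' hRpos hsame r hr δhat htail ε δ
    hδnonneg hεmono hδmono hcond
end

section
/- Fix p ∈ (0,1), λ ∈ [0,1), and constants A > 0, B ≥ 0, e₀ ≥ 0. For each integer h ≥ 1 define e_h = A·(2 + log(h+1))/√(h+1) + B·( (1/(h+1))·Σ_{i=1}^{h+1} λ^i + Σ_{j=1}^{h} (1/(j(j+1)))·Σ_{i=h+1−j}^{h+1} λ^i ). Then the binomial average satisfies Σ_{h=0}^{m} C(m,h)·(1−p)^h·p^{m−h}·e_h = O( (log m)/√m ) as m → ∞; i.e., there exist constants C' > 0 and m₀ such that for all m ≥ m₀ the sum is at most C'·(log m)/√m. -/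
/-!
The bias part of `e_h` is `O(1/h)`: with the geometric tail bound and `λⁱ ≤ C/i²`, the `j`-th
summand is `O(1/(j(h+1-j))²)`, and `j(h+1-j) ≥ (h+1)/2`. Hence `e_h ≤ K (2 + log(h+1))/√(h+1)`
for all `h`.
Averaging against the binomial weights, Jensen's inequality for `√` reduces the claim to
`E[1/(X+1)] ≤ 1/((m+1)(1-p))` for `X ~ Bin(m, 1-p)`, which follows from
`(m+1)·C(m,h) = (h+1)·C(m+1,h+1)`.
-/

open Finset Real

section Binomial

variable {q p : ℝ} {m : ℕ}

noncomputable def binomWeight (m : ℕ) (q p : ℝ) (h : ℕ) : ℝ :=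
  (m.choose h : ℝ) * q ^ h * p ^ (m - h)

lemma binomWeight_nonneg (hq : 0 ≤ q) (hp : 0 ≤ p) (h : ℕ) : 0 ≤ binomWeight m q p h := by
  unfold binomWeight; positivity

lemma sum_binomWeight (hqp : q + p = 1) : ∑ h ∈ range (m + 1), binomWeight m q p h = 1 := by
  rw [← one_pow (M := ℝ) m, ← hqp, add_pow]
  exact sum_congr rfl fun h _ => by unfold binomWeight; ring

lemma succ_mul_binomWeight (h : ℕ) :
    ((m : ℝ) + 1) * q * binomWeight m q p h = ((h : ℝ) + 1) * binomWeight (m + 1) q p (h + 1) := by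
  have hchoose : ((m : ℝ) + 1) * m.choose h = (m + 1).choose (h + 1) * ((h : ℝ) + 1) := by
    exact_mod_cast Nat.add_one_mul_choose_eq m h
  unfold binomWeight
  rw [Nat.add_sub_add_right]
  linear_combination q ^ (h + 1) * p ^ (m - h) * hchoose

lemma sum_binomWeight_div_succ_le (hq : 0 < q) (hp : 0 ≤ p) (hqp : q + p = 1) :
    ∑ h ∈ range (m + 1), binomWeight m q p h / ((h : ℝ) + 1) ≤ 1 / (((m : ℝ) + 1) * q) := by
  have hmq : 0 < ((m : ℝ) + 1) * q := by positivity
  have hterm : ∀ h ∈ range (m + 1), binomWeight m q p h / ((h : ℝ) + 1)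
      = binomWeight (m + 1) q p (h + 1) / (((m : ℝ) + 1) * q) := fun h _ => by
    rw [div_eq_div_iff (by positivity) hmq.ne', mul_comm, succ_mul_binomWeight, mul_comm]
  have hshift := sum_range_succ' (binomWeight (m + 1) q p) (m + 1)
  rw [sum_binomWeight hqp] at hshift
  rw [sum_congr rfl hterm, ← sum_div]
  gcongr
  linarith [binomWeight_nonneg (m := m + 1) hq.le hp 0]

end Binomial

lemma sum_mul_sqrt_le_sqrt_sum_mul {ι : Type*} {s : Finset ι} {w x : ι → ℝ}
    (hw : ∀ i ∈ s, 0 ≤ w i) (hw₁ : ∑ i ∈ s, w i = 1) (hx : ∀ i ∈ s, 0 ≤ x i) :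
    ∑ i ∈ s, w i * √(x i) ≤ √(∑ i ∈ s, w i * x i) :=
  strictConcaveOn_sqrt.concaveOn.le_map_sum hw hw₁ hx

lemma sum_binomWeight_div_sqrt_succ_le {q p : ℝ} {m : ℕ} (hq : 0 < q) (hp : 0 ≤ p)
    (hqp : q + p = 1) :
    ∑ h ∈ range (m + 1), binomWeight m q p h / √((h : ℝ) + 1) ≤ 1 / √(((m : ℝ) + 1) * q) := by
  have hjensen := sum_mul_sqrt_le_sqrt_sum_mul (s := range (m + 1))
    (x := fun h => 1 / ((h : ℝ) + 1)) (fun h _ => binomWeight_nonneg hq.le hp h)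
    (sum_binomWeight hqp) (fun h _ => by positivity)
  simp only [one_div, sqrt_inv, ← div_eq_mul_inv] at hjensen
  calc _ ≤ √(∑ h ∈ range (m + 1), binomWeight m q p h / ((h : ℝ) + 1)) := hjensen
    _ ≤ √(1 / (((m : ℝ) + 1) * q)) := sqrt_le_sqrt (sum_binomWeight_div_succ_le hq hp hqp)
    _ = 1 / √(((m : ℝ) + 1) * q) := by rw [one_div, sqrt_inv, one_div]

section MarkovBias

variable {lam : ℝ}

noncomputable def markovBias (lam : ℝ) (h : ℕ) : ℝ :=
  (1 / ((h : ℝ) + 1)) * (∑ i ∈ Icc 1 (h + 1), lam ^ i)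
    + ∑ j ∈ Icc 1 h, (1 / ((j : ℝ) * ((j : ℝ) + 1))) * ∑ i ∈ Icc (h + 1 - j) (h + 1), lam ^ i

lemma exists_pow_mul_pow_le (k : ℕ) {r : ℝ} (hr : |r| < 1) :
    ∃ C, ∀ n : ℕ, (n : ℝ) ^ k * r ^ n ≤ C := by
  obtain ⟨C, hC⟩ := (tendsto_pow_const_mul_const_pow_of_abs_lt_one k hr).bddAbove_range
  exact ⟨C, fun n => hC ⟨n, rfl⟩⟩

lemma sum_Icc_pow_le (h0 : 0 ≤ lam) (h1 : lam < 1) (a b : ℕ) :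
    ∑ i ∈ Icc a b, lam ^ i ≤ lam ^ a / (1 - lam) := by
  rw [← Ico_add_one_right_eq_Icc]
  exact geom_sum_Ico_le_of_lt_one h0 h1

lemma markovBias_term_le (h0 : 0 ≤ lam) (h1 : lam < 1) {C : ℝ}
    (hC : ∀ n : ℕ, (n : ℝ) ^ 2 * lam ^ n ≤ C) {h j : ℕ} (hj : j ∈ Icc 1 h) :
    (1 / ((j : ℝ) * ((j : ℝ) + 1))) * ∑ i ∈ Icc (h + 1 - j) (h + 1), lam ^ i
      ≤ 4 * C / ((1 - lam) * ((h : ℝ) + 1) ^ 2) := by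
  obtain ⟨hj1, hjh⟩ := mem_Icc.mp hj
  set k := h + 1 - j
  have hjk : (h : ℝ) + 1 = j + k := by
    rw [Nat.cast_sub (by omega)]; push_cast; ring
  have hj1' : (1 : ℝ) ≤ j := by exact_mod_cast hj1
  have hk1 : (1 : ℝ) ≤ k := by exact_mod_cast (show 1 ≤ k by omega)
  have hC0 : 0 ≤ C := by simpa using hC 0
  have hkey : ((h : ℝ) + 1) ^ 2 * lam ^ k ≤ 4 * C * ((j : ℝ) * ((j : ℝ) + 1)) := by
    have hsum : (j : ℝ) + k ≤ 2 * j * k := by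
      nlinarith [mul_nonneg (sub_nonneg.2 hj1') (sub_nonneg.2 hk1)]
    have hsq : ((h : ℝ) + 1) ^ 2 ≤ 4 * j ^ 2 * k ^ 2 := by
      rw [hjk]; nlinarith [pow_le_pow_left₀ (by positivity) hsum 2]
    calc ((h : ℝ) + 1) ^ 2 * lam ^ k ≤ 4 * j ^ 2 * (k ^ 2 * lam ^ k) := by
          nlinarith [pow_nonneg h0 k]
      _ ≤ 4 * j ^ 2 * C := by gcongr; exact hC k
      _ ≤ 4 * C * ((j : ℝ) * ((j : ℝ) + 1)) := by nlinarith
  have hq : 0 < 1 - lam := by linarith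
  calc _ ≤ (1 / ((j : ℝ) * ((j : ℝ) + 1))) * (lam ^ k / (1 - lam)) := by
        gcongr; exact sum_Icc_pow_le h0 h1 _ _
    _ ≤ 4 * C / ((1 - lam) * ((h : ℝ) + 1) ^ 2) := by
        rw [div_mul_div_comm, div_le_div_iff₀ (by positivity) (by positivity)]
        nlinarith

lemma exists_markovBias_le (h0 : 0 ≤ lam) (h1 : lam < 1) :
    ∃ c, 0 ≤ c ∧ ∀ h : ℕ, markovBias lam h ≤ c / ((h : ℝ) + 1) := by
  obtain ⟨C, hC⟩ := exists_pow_mul_pow_le 2 (abs_lt.mpr ⟨by linarith, h1⟩)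
  have hC0 : 0 ≤ C := by simpa using hC 0
  have hq : 0 < 1 - lam := by linarith
  refine ⟨(1 + 4 * C) / (1 - lam), by positivity, fun h => ?_⟩
  have hfirst : (1 / ((h : ℝ) + 1)) * (∑ i ∈ Icc 1 (h + 1), lam ^ i)
      ≤ (1 / ((h : ℝ) + 1)) * (1 / (1 - lam)) := by
    gcongr
    exact (sum_Icc_pow_le h0 h1 _ _).trans (by gcongr; exact pow_le_one₀ h0 (by simpa using h1.le))
  have hsecond := sum_le_sum fun j (hj : j ∈ Icc 1 h) => markovBias_term_le h0 h1 hC hj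
  rw [sum_const, Nat.card_Icc, Nat.add_sub_cancel, nsmul_eq_mul] at hsecond
  calc markovBias lam h
      ≤ (1 / ((h : ℝ) + 1)) * (1 / (1 - lam))
          + (h : ℝ) * (4 * C / ((1 - lam) * ((h : ℝ) + 1) ^ 2)) :=
        add_le_add hfirst hsecond
    _ ≤ (1 + 4 * C) / (1 - lam) / ((h : ℝ) + 1) := by
        field_simp
        nlinarith

end MarkovBias

lemma one_div_le_two_add_log_div_sqrt {x : ℝ} (hx : 1 ≤ x) : 1 / x ≤ (2 + log x) / √x := by
  have hsqrt : √x ≤ x := by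
    nlinarith [sq_sqrt (show 0 ≤ x by linarith), one_le_sqrt.mpr hx]
  calc 1 / x ≤ 1 / √x := one_div_le_one_div_of_le (sqrt_pos.mpr (by linarith)) hsqrt
    _ ≤ (2 + log x) / √x := by gcongr; linarith [log_nonneg hx]

lemma add_mul_markovBias_le {lam A B c : ℝ} (hB : 0 ≤ B) (hc : 0 ≤ c)
    (hbias : ∀ h : ℕ, markovBias lam h ≤ c / ((h : ℝ) + 1)) (h : ℕ) :
    A * (2 + log ((h : ℝ) + 1)) / √((h : ℝ) + 1) + B * markovBias lam h
      ≤ (A + B * c) * (2 + log ((h : ℝ) + 1)) / √((h : ℝ) + 1) := by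
  have hbias' : markovBias lam h ≤ c * ((2 + log ((h : ℝ) + 1)) / √((h : ℝ) + 1)) :=
    (hbias h).trans <| by
      rw [← mul_one_div]
      exact mul_le_mul_of_nonneg_left (one_div_le_two_add_log_div_sqrt (by simp)) hc
  calc _ ≤ A * (2 + log ((h : ℝ) + 1)) / √((h : ℝ) + 1)
        + B * (c * ((2 + log ((h : ℝ) + 1)) / √((h : ℝ) + 1))) := by gcongr
    _ = _ := by ring

lemma two_add_log_succ_div_sqrt_succ_le {m : ℕ} (hm : 3 ≤ m) :
    (2 + log ((m : ℝ) + 1)) / √((m : ℝ) + 1) ≤ 4 * log m / √m := by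
  have hm3 : (3 : ℝ) ≤ m := by exact_mod_cast hm
  have hlog : 1 ≤ log m := by
    rw [le_log_iff_exp_le (by linarith)]
    linarith [exp_one_lt_d9]
  have hlog_succ : log ((m : ℝ) + 1) ≤ 2 * log m := by
    rw [← Nat.cast_ofNat, ← log_pow]
    exact log_le_log (by positivity) (by nlinarith)
  calc _ ≤ 4 * log m / √((m : ℝ) + 1) := by gcongr; linarith
    _ ≤ 4 * log m / √m := by gcongr; linarith

lemma sum_binomWeight_mul_le {q p K : ℝ} {m : ℕ} {f : ℕ → ℝ} (hq : 0 < q) (hp : 0 ≤ p)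
    (hqp : q + p = 1) (hK : 0 ≤ K)
    (hf : ∀ h : ℕ, f h ≤ K * (2 + log ((h : ℝ) + 1)) / √((h : ℝ) + 1)) :
    ∑ h ∈ range (m + 1), binomWeight m q p h * f h
      ≤ K * (2 + log ((m : ℝ) + 1)) / √(((m : ℝ) + 1) * q) := by
  have hL : 0 ≤ K * (2 + log ((m : ℝ) + 1)) := by
    have := log_nonneg (show (1 : ℝ) ≤ m + 1 by simp)
    positivity
  have hterm : ∀ h ∈ range (m + 1), binomWeight m q p h * f h
      ≤ K * (2 + log ((m : ℝ) + 1)) * (binomWeight m q p h / √((h : ℝ) + 1)) := by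
    intro h hh
    have hhm : h ≤ m := Nat.lt_succ_iff.mp (mem_range.mp hh)
    calc binomWeight m q p h * f h
        ≤ binomWeight m q p h * (K * (2 + log ((h : ℝ) + 1)) / √((h : ℝ) + 1)) :=
          mul_le_mul_of_nonneg_left (hf h) (binomWeight_nonneg hq.le hp h)
      _ ≤ binomWeight m q p h * (K * (2 + log ((m : ℝ) + 1)) / √((h : ℝ) + 1)) := by
          have := binomWeight_nonneg (m := m) hq.le hp h
          gcongr
      _ = _ := by ring
  calc _ ≤ ∑ h ∈ range (m + 1),
          K * (2 + log ((m : ℝ) + 1)) * (binomWeight m q p h / √((h : ℝ) + 1)) :=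
        sum_le_sum hterm
    _ ≤ K * (2 + log ((m : ℝ) + 1)) * (1 / √(((m : ℝ) + 1) * q)) := by
        rw [← mul_sum]
        exact mul_le_mul_of_nonneg_left (sum_binomWeight_div_sqrt_succ_le hq hp hqp) hL
    _ = _ := mul_one_div _ _

theorem skipping_scheme_binomial_average_rate_general
    (p lam : ℝ) (hp0 : 0 < p) (hp1 : p < 1) (hlam0 : 0 ≤ lam) (hlam1 : lam < 1)
    (A B e₀ : ℝ) (hA : 0 < A) (hB : 0 ≤ B)
    (e : ℕ → ℝ) (he0 : e 0 = e₀)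
    (he : ∀ h : ℕ, 1 ≤ h →
      e h = A * (2 + Real.log ((h : ℝ) + 1)) / Real.sqrt ((h : ℝ) + 1)
        + B * ((1 / ((h : ℝ) + 1)) * (∑ i ∈ Finset.Icc 1 (h + 1), lam ^ i)
            + ∑ j ∈ Finset.Icc 1 h,
                (1 / ((j : ℝ) * ((j : ℝ) + 1))) *
                  ∑ i ∈ Finset.Icc (h + 1 - j) (h + 1), lam ^ i)) :
    ∃ C' : ℝ, 0 < C' ∧ ∃ m₀ : ℕ, ∀ m : ℕ, m₀ ≤ m →
      ∑ h ∈ Finset.range (m + 1),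
          (m.choose h : ℝ) * (1 - p) ^ h * p ^ (m - h) * e h
        ≤ C' * Real.log m / Real.sqrt m := by
  obtain ⟨c, hc, hbias⟩ := exists_markovBias_le hlam0 hlam1
  set K := A + B * c + |e₀|
  have hK : 0 < K := by positivity
  have he_le : ∀ h : ℕ, e h ≤ K * (2 + log ((h : ℝ) + 1)) / √((h : ℝ) + 1) := by
    rintro (_ | h)
    · simp only [he0, CharP.cast_eq_zero, zero_add, log_one, sqrt_one, div_one]
      nlinarith [le_abs_self e₀, mul_nonneg hB hc]
    rw [he _ h.succ_pos]
    refine (add_mul_markovBias_le hB hc hbias _).trans ?_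
    have := log_nonneg (le_add_of_nonneg_left (Nat.cast_nonneg (α := ℝ) (h + 1)))
    gcongr
    linarith [abs_nonneg e₀]
  have hq : 0 < 1 - p := by linarith
  refine ⟨4 * K / √(1 - p), by positivity, 3, fun m hm => ?_⟩
  calc _ ≤ K * (2 + log ((m : ℝ) + 1)) / √(((m : ℝ) + 1) * (1 - p)) :=
        sum_binomWeight_mul_le hq hp0.le (by ring) hK.le he_le
    _ = K / √(1 - p) * ((2 + log ((m : ℝ) + 1)) / √((m : ℝ) + 1)) := by
        rw [sqrt_mul (by positivity)]; ring
    _ ≤ K / √(1 - p) * (4 * log m / √m) := by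
        gcongr ?_ * ?_; exact two_add_log_succ_div_sqrt_succ_le hm
    _ = _ := by ring

/-- Asymptotic convergence rate of the skipping scheme: for the error
bounds `e_h = A·(2+log(h+1))/√(h+1)
        + B·((1/(h+1))·Σ_{i=1}^{h+1} λⁱ + Σ_{j=1}^{h} (1/(j(j+1)))·Σ_{i=h+1−j}^{h+1} λⁱ)`
(for `h ≥ 1`, with `e_0 = e₀`), the binomial average satisfies
`Σ_{h=0}^{m} C(m,h)·(1−p)ʰ·p^{m−h}·e_h = O((log m)/√m)` as `m → ∞`. -/
theorem skipping_scheme_binomial_average_rate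
    (p lam : ℝ) (hp0 : 0 < p) (hp1 : p < 1) (hlam0 : 0 ≤ lam) (hlam1 : lam < 1)
    (A B e₀ : ℝ) (hA : 0 < A) (hB : 0 ≤ B) (he₀ : 0 ≤ e₀)
    (e : ℕ → ℝ) (he0 : e 0 = e₀)
    (he : ∀ h : ℕ, 1 ≤ h →
      e h = A * (2 + Real.log ((h : ℝ) + 1)) / Real.sqrt ((h : ℝ) + 1)
        + B * ((1 / ((h : ℝ) + 1)) * (∑ i ∈ Finset.Icc 1 (h + 1), lam ^ i)
            + ∑ j ∈ Finset.Icc 1 h,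
                (1 / ((j : ℝ) * ((j : ℝ) + 1))) *
                  ∑ i ∈ Finset.Icc (h + 1 - j) (h + 1), lam ^ i)) :
    ∃ C' : ℝ, 0 < C' ∧ ∃ m₀ : ℕ, ∀ m : ℕ, m₀ ≤ m →
      ∑ h ∈ Finset.range (m + 1),
          (m.choose h : ℝ) * (1 - p) ^ h * p ^ (m - h) * e h
        ≤ C' * Real.log m / Real.sqrt m :=
  skipping_scheme_binomial_average_rate_general p lam hp0 hp1 hlam0 hlam1 A B e₀ hA hB e he0 he
end
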